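/- Let n ≥ 3 be an integer, ω₀ > 1, δ ∈ (0,1) and v̄ > 2·ln(n−1+ω₀). Then the equation δ(2−δ)·v − 2(1−δ)·J̃(v) = δ·v̄ has a solution v in the open interval (v̄/(2−δ), v̄) if and only if δ·v̄ > 2·ln(n−1+ω₀); moreover, when δ·v̄ > 2·ln(n−1+ω₀) this solution is unique. -/

import Mathlib

/-!
`J̃(v)` is the value at `v / v̄` of the Bernstein polynomial of degree `n - 1` with coefficients
`m ↦ log (m + ω₀)`. The second derivative of a Bernstein polynomial is a positive multiple of the
Bernstein polynomial of the second differences of its coefficients, so concavity of `log` makes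
`J̃` concave and the left-hand side `F` of the equation convex. At the left endpoint
`F (v̄ / (2 - δ)) = δ v̄ - 2 (1 - δ) J̃ < δ v̄`, and a convex function starting below a level can
only cross it once, upwards. Hence a solution in the open interval exists iff `δ v̄ < F v̄`, which
unfolds to `2 log (n - 1 + ω₀) < δ v̄`, and then it is unique.
-/

open Real Finset

/-- The expected social-network benefit at threshold `v` under uniform valuations. -/
noncomputable def Jt (n : ℕ) (ω₀ vbar : ℝ) (v : ℝ) : ℝ :=
  ∑ m ∈ Finset.range n, (Nat.choose (n - 1) m : ℝ) * Real.log ((m : ℝ) + ω₀) *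
    (v / vbar) ^ m * (1 - v / vbar) ^ (n - 1 - m)

open Polynomial
open scoped fwdDiff

section Bernstein

variable {R : Type*} [CommRing R]

noncomputable def bernsteinSum (c : ℕ → R) (N : ℕ) : R[X] :=
  ∑ m ∈ range (N + 1), C (c m) * bernsteinPolynomial R N m

theorem derivative_bernsteinSum (c : ℕ → R) (N : ℕ) :
    derivative (bernsteinSum c N) = N * bernsteinSum (Δ_[1] c) (N - 1) := by
  rcases N with _ | N
  · simp [bernsteinSum, bernsteinPolynomial]
  -- reindexing `m ↦ m + 1` costs nothing because `bernsteinPolynomial R N (N + 1) = 0`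
  have shift : ∑ m ∈ range (N + 1), C (c (m + 1)) * bernsteinPolynomial R N (m + 1)
      + C (c 0) * bernsteinPolynomial R N 0
      = ∑ m ∈ range (N + 1), C (c m) * bernsteinPolynomial R N m := by
    rw [← sum_range_succ' (fun m => C (c m) * bernsteinPolynomial R N m), sum_range_succ,
      bernsteinPolynomial.eq_zero_of_lt R (lt_add_one N), mul_zero, add_zero]
  simp only [bernsteinSum, derivative_sum, derivative_C_mul]
  rw [sum_range_succ', bernsteinPolynomial.derivative_zero, Nat.add_sub_cancel]
  simp only [bernsteinPolynomial.derivative_succ_aux, fwdDiff, C_sub, sub_mul, sum_sub_distrib,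
    ← shift, mul_sub, mul_left_comm (C _), ← mul_sum]
  push_cast
  ring

theorem derivative_derivative_bernsteinSum (c : ℕ → R) (N : ℕ) :
    derivative (derivative (bernsteinSum c N)) =
      N * (N - 1 : ℕ) * bernsteinSum (Δ_[1] (Δ_[1] c)) (N - 2) := by
  rw [derivative_bernsteinSum, derivative_natCast_mul, derivative_bernsteinSum, mul_assoc,
    Nat.sub_sub]

theorem eval_bernsteinSum (c : ℕ → R) (N : ℕ) (x : R) :
    (bernsteinSum c N).eval x = ∑ m ∈ range (N + 1), c m * (bernsteinPolynomial R N m).eval x := by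
  simp [bernsteinSum, eval_finsetSum]

theorem eval_zero_bernsteinSum (c : ℕ → R) (N : ℕ) : (bernsteinSum c N).eval 0 = c 0 := by
  simp [eval_bernsteinSum, bernsteinPolynomial.eval_at_0]

theorem eval_one_bernsteinSum (c : ℕ → R) (N : ℕ) : (bernsteinSum c N).eval 1 = c N := by
  simp [eval_bernsteinSum, bernsteinPolynomial.eval_at_1]

end Bernstein

theorem eval_bernsteinSum_nonpos {d : ℕ → ℝ} (hd : ∀ m, d m ≤ 0) (N : ℕ) {x : ℝ}
    (hx : x ∈ Set.Icc 0 1) : (bernsteinSum d N).eval x ≤ 0 := by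
  rw [eval_bernsteinSum]
  exact sum_nonpos fun m _ =>
    mul_nonpos_of_nonpos_of_nonneg (hd m) (bernstein_nonneg (x := ⟨x, hx⟩))

theorem concaveOn_eval_bernsteinSum {c : ℕ → ℝ} (hc : ∀ m, Δ_[1] (Δ_[1] c) m ≤ 0) (N : ℕ) :
    ConcaveOn ℝ (Set.Icc 0 1) fun x => (bernsteinSum c N).eval x := by
  refine concaveOn_of_hasDerivWithinAt2_nonpos (convex_Icc 0 1)
    (bernsteinSum c N).continuousOn (fun x _ => (Polynomial.hasDerivAt _ x).hasDerivWithinAt)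
    (fun x _ => (Polynomial.hasDerivAt _ x).hasDerivWithinAt) fun x hx => ?_
  rw [derivative_derivative_bernsteinSum, eval_mul]
  exact mul_nonpos_of_nonneg_of_nonpos (by simp only [eval_mul, eval_natCast]; positivity)
    (eval_bernsteinSum_nonpos hc _ (interior_subset hx))

theorem ConcaveOn.fwdDiff_fwdDiff_nonpos {g : ℝ → ℝ} {s : Set ℝ} {ω : ℝ} (hg : ConcaveOn ℝ s g)
    (hs : ∀ m : ℕ, (m : ℝ) + ω ∈ s) (m : ℕ) :
    Δ_[1] (Δ_[1] fun k : ℕ => g (k + ω)) m ≤ 0 := by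
  have hmid := hg.2 (hs m) (hs (m + 2)) (by norm_num : (0 : ℝ) ≤ 1 / 2)
    (by norm_num : (0 : ℝ) ≤ 1 / 2) (by norm_num)
  have hm : (1 / 2 : ℝ) • ((m : ℝ) + ω) + (1 / 2 : ℝ) • (((m + 2 : ℕ) : ℝ) + ω)
      = ((m + 1 : ℕ) : ℝ) + ω := by
    push_cast; simp only [smul_eq_mul]; ring
  rw [hm, smul_eq_mul, smul_eq_mul] at hmid
  simp only [fwdDiff]
  linarith

section Benefit

variable {n : ℕ} {ω₀ vbar : ℝ}

theorem Jt_eq_eval_bernsteinSum (hn : 1 ≤ n) (v : ℝ) :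
    Jt n ω₀ vbar v = (bernsteinSum (fun m : ℕ => log (m + ω₀)) (n - 1)).eval (v / vbar) := by
  obtain ⟨N, rfl⟩ := Nat.exists_eq_add_of_le' hn
  simp only [Jt, eval_bernsteinSum, bernsteinPolynomial, Nat.add_sub_cancel]
  refine sum_congr rfl fun m _ => ?_
  simp only [eval_mul, eval_natCast, eval_pow, eval_X, eval_sub, eval_one]
  ring

theorem Jt_zero (hn : 1 ≤ n) : Jt n ω₀ vbar 0 = log ω₀ := by
  simp [Jt_eq_eval_bernsteinSum hn, eval_zero_bernsteinSum]

theorem Jt_self (hn : 1 ≤ n) (hvbar : vbar ≠ 0) : Jt n ω₀ vbar vbar = log (n - 1 + ω₀) := by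
  simp [Jt_eq_eval_bernsteinSum hn, hvbar, eval_one_bernsteinSum, Nat.cast_sub hn]

theorem concaveOn_Jt (hn : 1 ≤ n) (hω : 0 < ω₀) (hvbar : 0 < vbar) :
    ConcaveOn ℝ (Set.Icc 0 vbar) (Jt n ω₀ vbar) := by
  have hP := concaveOn_eval_bernsteinSum
    ((strictConcaveOn_log_Ioi.concaveOn).fwdDiff_fwdDiff_nonpos
      (fun m => show (0 : ℝ) < m + ω₀ by positivity)) (n - 1)
  have hscale : ∀ v ∈ Set.Icc 0 vbar, v / vbar ∈ Set.Icc (0 : ℝ) 1 := fun v hv =>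
    ⟨div_nonneg hv.1 hvbar.le, div_le_one_of_le₀ hv.2 hvbar.le⟩
  refine ⟨convex_Icc 0 vbar, fun x hx y hy a b ha hb hab => ?_⟩
  have hmix : (a • x + b • y) / vbar = a • (x / vbar) + b • (y / vbar) := by
    simp only [smul_eq_mul]; ring
  simp only [Jt_eq_eval_bernsteinSum hn, hmix]
  exact hP.2 (hscale x hx) (hscale y hy) ha hb hab

theorem Jt_pos (hn : 1 ≤ n) (hω : 1 < ω₀) (hvbar : 0 < vbar) {v : ℝ}
    (hv : v ∈ Set.Icc 0 vbar) : 0 < Jt n ω₀ vbar v := by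
  have hlast : 0 < log ((n : ℝ) - 1 + ω₀) :=
    log_pos (by linarith [(Nat.one_le_cast (α := ℝ)).2 hn])
  refine (lt_min (log_pos hω) hlast).trans_le ?_
  rw [← Jt_zero hn, ← Jt_self hn hvbar.ne']
  exact (concaveOn_Jt hn (by linarith) hvbar).ge_on_segment (Set.left_mem_Icc.2 hvbar.le)
    (Set.right_mem_Icc.2 hvbar.le) (by rwa [segment_eq_Icc hvbar.le])

theorem continuous_Jt : Continuous (Jt n ω₀ vbar) := by
  unfold Jt
  fun_prop

theorem convexOn_equilibrium {δ : ℝ} (hn : 1 ≤ n) (hω : 0 < ω₀) (hvbar : 0 < vbar)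
    (hδ : δ ∈ Set.Icc (0 : ℝ) 1) :
    ConvexOn ℝ (Set.Icc 0 vbar) fun v => δ * (2 - δ) * v - 2 * (1 - δ) * Jt n ω₀ vbar v :=
  ((convexOn_id (convex_Icc 0 vbar)).smul (by nlinarith [hδ.1, hδ.2])).sub
    ((concaveOn_Jt hn hω hvbar).smul (by linarith [hδ.2]))

end Benefit

section Crossing

variable {f : ℝ → ℝ} {a b c : ℝ}

theorem ConvexOn.lt_of_eq_of_left_lt (hf : ConvexOn ℝ (Set.Icc a b) f) (ha : f a < c) {x y : ℝ}
    (hx : x ∈ Set.Ioo a y) (hy : y ∈ Set.Icc a b) (hfx : f x = c) : c < f y := by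
  subst hfx
  refine hf.lt_right_of_left_lt (Set.left_mem_Icc.2 (hx.1.trans hx.2 |>.le.trans hy.2)) hy ?_ ha
  rwa [openSegment_eq_Ioo (hx.1.trans hx.2)]

theorem ConvexOn.exists_mem_Ioo_eq_iff (hab : a < b) (hf : ConvexOn ℝ (Set.Icc a b) f)
    (hcont : ContinuousOn f (Set.Icc a b)) (ha : f a < c) :
    (∃ x ∈ Set.Ioo a b, f x = c) ↔ c < f b :=
  ⟨fun ⟨_, hx, hfx⟩ => hf.lt_of_eq_of_left_lt ha hx (Set.right_mem_Icc.2 hab.le) hfx,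
    fun hb => intermediate_value_Ioo hab.le hcont ⟨ha, hb⟩⟩

theorem ConvexOn.existsUnique_mem_Ioo_eq (hab : a < b) (hf : ConvexOn ℝ (Set.Icc a b) f)
    (hcont : ContinuousOn f (Set.Icc a b)) (ha : f a < c) (hb : c < f b) :
    ∃! x, x ∈ Set.Ioo a b ∧ f x = c := by
  obtain ⟨x, hx, hfx⟩ := (hf.exists_mem_Ioo_eq_iff hab hcont ha).2 hb
  refine ⟨x, ⟨hx, hfx⟩, fun y ⟨hy, hfy⟩ => ?_⟩
  rcases lt_trichotomy y x with h | h | h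
  · exact absurd hfx (hf.lt_of_eq_of_left_lt ha ⟨hy.1, h⟩ (Set.Ioo_subset_Icc_self hx) hfy).ne'
  · exact h
  · exact absurd hfy (hf.lt_of_eq_of_left_lt ha ⟨hx.1, h⟩ (Set.Ioo_subset_Icc_self hy) hfx).ne'

end Crossing

/-- The equilibrium equation `δ(2−δ)v − 2(1−δ)J̃(v) = δv̄` has a solution in
`(v̄/(2−δ), v̄)` iff `δ·v̄ > 2·ln(n−1+ω₀)`, and then the solution is unique. -/
theorem stmt2 (n : ℕ) (hn : 3 ≤ n) (ω₀ δ vbar : ℝ) (hω : 1 < ω₀)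
    (hδ : δ ∈ Set.Ioo (0 : ℝ) 1)
    (hv : 2 * Real.log ((n : ℝ) - 1 + ω₀) < vbar) :
    ((∃ v ∈ Set.Ioo (vbar / (2 - δ)) vbar,
        δ * (2 - δ) * v - 2 * (1 - δ) * Jt n ω₀ vbar v = δ * vbar) ↔
      2 * Real.log ((n : ℝ) - 1 + ω₀) < δ * vbar) ∧
    (2 * Real.log ((n : ℝ) - 1 + ω₀) < δ * vbar →
      ∃! v, v ∈ Set.Ioo (vbar / (2 - δ)) vbar ∧
        δ * (2 - δ) * v - 2 * (1 - δ) * Jt n ω₀ vbar v = δ * vbar) := by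
  obtain ⟨hδ0, hδ1⟩ := hδ
  have hn1 : 1 ≤ n := by omega
  have hvbar : 0 < vbar := by
    have : (1 : ℝ) ≤ n := by exact_mod_cast hn1
    linarith [log_pos (by linarith : (1 : ℝ) < n - 1 + ω₀)]
  set a := vbar / (2 - δ)
  have ha : a ∈ Set.Ioo 0 vbar := ⟨div_pos hvbar (by linarith), div_lt_self hvbar (by linarith)⟩
  have hconv := (convexOn_equilibrium hn1 (zero_lt_one.trans hω) hvbar ⟨hδ0.le, hδ1.le⟩).subset
    (Set.Icc_subset_Icc ha.1.le le_rfl) (convex_Icc a vbar)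
  have hcont : ContinuousOn (fun v => δ * (2 - δ) * v - 2 * (1 - δ) * Jt n ω₀ vbar v)
      (Set.Icc a vbar) :=
    ((continuous_id.const_mul _).sub (continuous_Jt.const_mul _)).continuousOn
  have hFa : δ * (2 - δ) * a - 2 * (1 - δ) * Jt n ω₀ vbar a < δ * vbar := by
    have hlin : δ * (2 - δ) * a = δ * vbar := by
      simp only [a]; field_simp [show (2 - δ) ≠ 0 by linarith]
    nlinarith [Jt_pos hn1 hω hvbar (Set.Ioo_subset_Icc_self ha)]
  have hFb : δ * vbar < δ * (2 - δ) * vbar - 2 * (1 - δ) * Jt n ω₀ vbar vbar ↔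
      2 * log ((n : ℝ) - 1 + ω₀) < δ * vbar := by
    rw [Jt_self hn1 hvbar.ne']
    constructor <;> intro h <;> nlinarith
  rw [← hFb]
  exact ⟨hconv.exists_mem_Ioo_eq_iff ha.2 hcont hFa, hconv.existsUnique_mem_Ioo_eq ha.2 hcont hFa⟩
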